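/- With x_m := (e_{0m}, (0 m)) in Graphs(n+1) ⋊ S_{n+1} as above, for every i in {1,...,n} one has x_i² = identity, and for distinct i, j one has (x_i x_j)³ = identity. -/

import Mathlib

open Equiv Finset

abbrev Vtx (n : ℕ) := Fin (n+1)
abbrev Edge (n : ℕ) := {e : Sym2 (Vtx n) // ¬ e.IsDiag}
abbrev Graphs (n : ℕ) := Edge n → ZMod 2

/-- relabelling of edges by a permutation of vertices -/
def permEdge {n : ℕ} (σ : Perm (Vtx n)) : Edge n ≃ Edge n where
  toFun e := ⟨Sym2.map σ e.1, by
    simpa [Sym2.isDiag_map σ.injective] using e.2⟩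
  invFun e := ⟨Sym2.map σ.symm e.1, by
    simpa [Sym2.isDiag_map σ.symm.injective] using e.2⟩
  left_inv e := by
    ext1
    simp [Sym2.map_map]
  right_inv e := by
    ext1
    simp [Sym2.map_map]

/-- action of a vertex permutation on graphs -/
def gact {n : ℕ} (σ : Perm (Vtx n)) : Graphs n ≃+ Graphs n where
  toFun g := fun e => g ((permEdge σ).symm e)
  invFun g := fun e => g (permEdge σ e)
  left_inv g := by funext e; simp
  right_inv g := by funext e; simp
  map_add' g h := rfl

lemma gact_mul {n : ℕ} (σ τ : Perm (Vtx n)) (g : Graphs n) :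
    gact (σ * τ) g = gact σ (gact τ g) := by
  funext e
  simp only [gact, AddEquiv.coe_mk, Equiv.coe_fn_mk, Equiv.symm]
  congr 1
  ext1
  simp [permEdge, Sym2.map_map]
  rfl

/-- the action as a homomorphism to automorphisms, multiplicatively -/
def φn (n : ℕ) : Perm (Vtx n) →* MulAut (Multiplicative (Graphs n)) where
  toFun σ := AddEquiv.toMultiplicative (gact σ)
  map_one' := by
    ext g x
    simp [gact, permEdge, Equiv.Perm.one_symm]
  map_mul' σ τ := by
    ext g x
    exact congrFun (gact_mul σ τ g.toAdd) x

/-- the ambient group `Graphs(n+1) ⋊ S_{n+1}` -/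
abbrev DG (n : ℕ) := SemidirectProduct (Multiplicative (Graphs n)) (Perm (Vtx n)) (φn n)

/-- the single-edge graph with edge `{u,v}` -/
def single {n : ℕ} (u v : Vtx n) : Graphs n :=
  fun e => if e.1 = s(u, v) then 1 else 0

/-- the generator `x_m = (e_{0m}, (0 m))` -/
def xgen {n : ℕ} (m : Vtx n) : DG n :=
  ⟨Multiplicative.ofAdd (single 0 m), Equiv.swap 0 m⟩

/-- the degree of a vertex in a graph -/
def deg {n : ℕ} (g : Graphs n) (v : Vtx n) : ℕ :=
  (Finset.univ.filter (fun e : Edge n => v ∈ e.1 ∧ g e = 1)).card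

/-- the number of edges of a graph -/
def nedges {n : ℕ} (g : Graphs n) : ℕ :=
  (Finset.univ.filter (fun e : Edge n => g e = 1)).card

/-- all degrees even and an even number of edges -/
def evenGraph {n : ℕ} (g : Graphs n) : Prop :=
  (∀ v : Vtx n, Even (deg g v)) ∧ Even (nedges g)

/-- the subgroup generated by the `x_m`, `m = 1, …, n` -/
def Dn (n : ℕ) : Subgroup (DG n) :=
  Subgroup.closure {x | ∃ m : Vtx n, m ≠ 0 ∧ x = xgen m}

/-- the complete graph -/
def complete (n : ℕ) : Graphs n := fun _ => 1

namespace SemidirectProduct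

variable {N G : Type*} [Group N] [Group G] {φ : G →* MulAut N}

lemma mk_sq (a : N) (g : G) : (⟨a, g⟩ : N ⋊[φ] G) ^ 2 = ⟨a * φ g a, g ^ 2⟩ := by
  ext <;> simp [pow_two]

lemma mk_pow_three (a : N) (g : G) :
    (⟨a, g⟩ : N ⋊[φ] G) ^ 3 = ⟨a * φ g a * φ (g ^ 2) a, g ^ 3⟩ := by
  ext <;> simp [pow_succ, mul_assoc]

end SemidirectProduct

lemma single_comm {n : ℕ} (u v : Vtx n) : single u v = single v u := by
  funext e
  simp only [single, Sym2.eq_swap]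

lemma gact_single {n : ℕ} (σ : Perm (Vtx n)) (u v : Vtx n) :
    gact σ (single u v) = single (σ u) (σ v) := by
  funext e
  refine if_congr ?_ rfl rfl
  change Sym2.map σ.symm e.1 = s(u, v) ↔ e.1 = s(σ u, σ v)
  rw [← (Sym2.map.injective σ.injective).eq_iff, Sym2.map_map]
  simp

lemma φn_ofAdd {n : ℕ} (σ : Perm (Vtx n)) (g : Graphs n) :
    φn n σ (Multiplicative.ofAdd g) = Multiplicative.ofAdd (gact σ g) :=
  rfl

lemma xgen_sq {n : ℕ} (m : Vtx n) : xgen m ^ 2 = 1 := by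
  rw [xgen, SemidirectProduct.mk_sq, φn_ofAdd, gact_single, swap_apply_left, swap_apply_right,
    single_comm m, ← ofAdd_add, ZModModule.add_self, sq, swap_mul_self]
  rfl

lemma xgen_mul_xgen {n : ℕ} {i j : Vtx n} (hj : j ≠ 0) (hij : i ≠ j) :
    xgen i * xgen j =
      ⟨Multiplicative.ofAdd (single 0 i + single i j), swap 0 i * swap 0 j⟩ := by
  ext1
  · simp only [xgen, SemidirectProduct.mul_left, φn_ofAdd, gact_single, swap_apply_left,
      swap_apply_of_ne_of_ne hj hij.symm, ofAdd_add]
  · rfl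

lemma xgen_mul_xgen_pow_three {n : ℕ} {i j : Vtx n} (hi : i ≠ 0) (hj : j ≠ 0) (hij : i ≠ j) :
    (xgen i * xgen j) ^ 3 = 1 := by
  rw [xgen_mul_xgen hj hij, SemidirectProduct.mk_pow_three]
  ext1
  · rw [φn_ofAdd, sq, φn_ofAdd, gact_mul, ← ofAdd_add, ← ofAdd_add]
    simp only [map_add, gact_single, Perm.mul_apply, swap_apply_left, swap_apply_right,
      swap_apply_of_ne_of_ne hi hij, swap_apply_of_ne_of_ne hj hij.symm]
    rw [SemidirectProduct.one_left, ofAdd_eq_one]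
    -- every edge of the triangle `0 i j` occurs twice
    calc _ = (single 0 i + single 0 i) + (single i j + single i j) + (single j 0 + single j 0) := by
          abel
      _ = 0 := by simp only [ZModModule.add_self]
  · exact (Perm.isThreeCycle_swap_mul_swap_same hi.symm hj.symm hij).orderOf ▸ pow_orderOf_eq_one _

/-- In `Graphs(n+1) ⋊ S_{n+1}`, every `x_i` satisfies `x_i² = 1`, and for distinct
`i, j` one has `(x_i x_j)³ = 1`. -/
theorem stmt5 (n : ℕ) (i j : Vtx n) (hi : i ≠ 0) (hj : j ≠ 0) (hij : i ≠ j) :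
    (xgen i) ^ 2 = 1 ∧ (xgen i * xgen j) ^ 3 = 1 :=
  ⟨xgen_sq i, xgen_mul_xgen_pow_three hi hj hij⟩
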